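/- arXiv:2401.10818 — 2 statements merged into one kernel-verified Lean document; each statement's English description precedes it below -/
import Mathlib

section
/- Let α ∈ (−1,0) be fixed and let λ : ℕ → ℝ_{>0} satisfy λ(n)·n·(log n)^α → ∞ as n → ∞ (i.e. λ ∈ ω(log(n)^{−α}/n)). For each n, let T_n be the survival time of the clique infection chain on {0,…,n} with parameters λ(n), α, started at X₀ = 1. Then E[T_n] is super-polynomial in n: for every k ∈ ℕ, E[T_n]/n^k → ∞ as n → ∞. -/
open scoped ENNReal
open Filter Asymptotics

noncomputable def markovDist {S : Type*} [DecidableEq S] (step : S → S → ℝ≥0∞) (s0 : S) :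
    ℕ → S → ℝ≥0∞
  | 0 => fun J => if J = s0 then 1 else 0
  | t + 1 => fun J => ∑' s : S, markovDist step s0 t s * step s J

open Classical in
noncomputable def absorbStep {S : Type*} (A : Set S) (step : S → S → ℝ≥0∞) :
    S → S → ℝ≥0∞ :=
  fun s => if s ∈ A then (fun J => if J = s then 1 else 0) else step s

noncomputable def hitProb {S : Type*} [DecidableEq S] (step : S → S → ℝ≥0∞) (s0 : S)
    (A : Set S) : ℝ≥0∞ :=
  ⨆ t : ℕ, ∑' s : S, A.indicator (markovDist (absorbStep A step) s0 t) s

noncomputable def cliqueStep (n : ℕ) (lam alpha : ℝ) (I : ℕ) : ℕ → ℝ≥0∞ :=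
  if I = 0 ∨ n < I then fun J => if J = I then 1 else 0
  else fun J =>
    if J = I + 1 then
      ENNReal.ofReal (lam * (I : ℝ) ^ (1 + alpha) * ((n : ℝ) - I) /
        (lam * (I : ℝ) ^ (1 + alpha) * ((n : ℝ) - I) + I))
    else if J = I - 1 then
      ENNReal.ofReal ((I : ℝ) /
        (lam * (I : ℝ) ^ (1 + alpha) * ((n : ℝ) - I) + I))
    else 0

noncomputable def cliqueDist (n : ℕ) (lam alpha : ℝ) (x0 : ℕ) : ℕ → ℕ → ℝ≥0∞ :=
  markovDist (cliqueStep n lam alpha) x0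

noncomputable def cliqueET (n : ℕ) (lam alpha : ℝ) (x0 : ℕ) : ℝ≥0∞ :=
  ∑' t : ℕ, (1 - cliqueDist n lam alpha x0 t 0)

/-!
Take `m = (k + 1) (⌊log₂ n⌋ + 1) = O(log n)`, so that `2 ^ m ≥ n ^ (k + 1)`. For `1 ≤ s ≤ m` and
`α < 0` we have `s ^ α ≥ m ^ α ≳ (log n) ^ α`, so the hypothesis on `λ` makes `b(s) ≥ 2 s` for large
`n`: below `m` the chain steps up with probability at least `2 / 3`. The bounded barrier
`f(s) = 2 ^ (m + 1) - 2 ^ (m + 1 - s)` then satisfies `f(0) = 0` and `f(s) ≤ 1 + E[f(X₁) | X₀ = s]`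
for `s ≠ 0`; summing this along the chain gives `E[T] ≥ f(1) = 2 ^ m`.
-/

open Topology

section MarkovChain

variable {S : Type*} [DecidableEq S] (step : S → S → ℝ≥0∞) (x0 z : S)

theorem tsum_markovDist_succ_mul (t : ℕ) (g : S → ℝ≥0∞) :
    ∑' s, markovDist step x0 (t + 1) s * g s =
      ∑' s, markovDist step x0 t s * ∑' J, step s J * g J := by
  simp only [markovDist, ← ENNReal.tsum_mul_right, ← ENNReal.tsum_mul_left, mul_assoc]
  exact ENNReal.tsum_comm

variable {step}

theorem tsum_markovDist_le_one (hrow : ∀ s, ∑' J, step s J ≤ 1) (t : ℕ) :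
    ∑' s, markovDist step x0 t s ≤ 1 := by
  induction t with
  | zero => simp [markovDist]
  | succ t ih =>
    calc ∑' s, markovDist step x0 (t + 1) s
        = ∑' s, markovDist step x0 t s * ∑' J, step s J * 1 := by
          simpa using tsum_markovDist_succ_mul step x0 t 1
      _ ≤ ∑' s, markovDist step x0 t s * 1 := by gcongr with s; simpa using hrow s
      _ ≤ 1 := by simpa using ih

theorem tsum_indicator_markovDist_le (hrow : ∀ s, ∑' J, step s J ≤ 1) (t : ℕ) :
    ∑' s, ({z}ᶜ : Set S).indicator (markovDist step x0 t) s ≤ 1 - markovDist step x0 t z := by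
  have hmass := tsum_markovDist_le_one x0 hrow t
  refine ENNReal.le_sub_of_add_le_right
    (ne_top_of_le_ne_top ENNReal.one_ne_top ((ENNReal.le_tsum z).trans hmass)) ?_
  calc _ = ∑' s, markovDist step x0 t s := by
        rw [← tsum_ite_eq z (markovDist step x0 t), ← ENNReal.tsum_add]
        refine tsum_congr fun s => ?_
        by_cases hs : s = z <;> simp [hs]
    _ ≤ 1 := hmass

variable {f : S → ℝ≥0∞} (hfz : f z = 0) (hf : ∀ s ≠ z, f s ≤ 1 + ∑' J, step s J * f J)
include hfz hf

theorem le_sum_range_add_tsum_markovDist_mul (N : ℕ) :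
    f x0 ≤ ∑ t ∈ Finset.range N, ∑' s, ({z}ᶜ : Set S).indicator (markovDist step x0 t) s +
      ∑' s, markovDist step x0 N s * f s := by
  have hf' : ∀ s, f s ≤ ({z}ᶜ : Set S).indicator 1 s + ∑' J, step s J * f J := by
    intro s
    by_cases hs : s = z
    · simp [hs, hfz]
    · simpa [hs] using hf s hs
  induction N with
  | zero => simp [markovDist]
  | succ N ih =>
    have hstep : ∑' s, markovDist step x0 N s * f s ≤
        ∑' s, ({z}ᶜ : Set S).indicator (markovDist step x0 N) s +
          ∑' s, markovDist step x0 (N + 1) s * f s := by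
      calc ∑' s, markovDist step x0 N s * f s
          ≤ ∑' s, markovDist step x0 N s *
              (({z}ᶜ : Set S).indicator 1 s + ∑' J, step s J * f J) := by gcongr with s; exact hf' s
        _ = _ := by
          simp only [mul_add, ENNReal.tsum_add, tsum_markovDist_succ_mul]
          congr 1
          refine tsum_congr fun s => ?_
          by_cases hs : s = z <;> simp [hs]
    rw [Finset.sum_range_succ, add_assoc]
    exact ih.trans (by gcongr)

theorem le_tsum_one_sub_markovDist_of_lyapunov (hrow : ∀ s, ∑' J, step s J ≤ 1) {C : ℝ≥0∞}
    (hC : C ≠ ⊤) (hfC : ∀ s, f s ≤ C) :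
    f x0 ≤ ∑' t, (1 - markovDist step x0 t z) := by
  set a : ℕ → ℝ≥0∞ := fun t => ∑' s, ({z}ᶜ : Set S).indicator (markovDist step x0 t) s
  suffices f x0 ≤ ∑' t, a t from
    this.trans (ENNReal.tsum_le_tsum (tsum_indicator_markovDist_le x0 z hrow))
  by_cases ha : ∑' t, a t = ⊤
  · simp [ha]
  have hremainder : ∀ N, ∑' s, markovDist step x0 N s * f s ≤ a N * C := by
    intro N
    rw [← ENNReal.tsum_mul_right]
    refine ENNReal.tsum_le_tsum fun s => ?_
    by_cases hs : s = z
    · simp [hs, hfz]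
    · simpa [hs] using mul_le_mul_right (hfC s) (markovDist step x0 N s)
  have hlim : Tendsto (fun N => ∑ t ∈ Finset.range N, a t + a N * C) atTop (𝓝 (∑' t, a t)) := by
    simpa using (ENNReal.tendsto_nat_tsum a).add
      (ENNReal.Tendsto.mul_const (ENNReal.tendsto_atTop_zero_of_tsum_ne_top ha) (Or.inr hC))
  refine ge_of_tendsto hlim (Eventually.of_forall fun N => ?_)
  exact (le_sum_range_add_tsum_markovDist_mul x0 z hfz hf N).trans (by gcongr; exact hremainder N)

end MarkovChain

/-- The exponent `m + 1 - s` truncates at `0`, so the barrier is constant from `m + 1` on. -/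
noncomputable def barrier (m s : ℕ) : ℝ := 2 ^ (m + 1) - 2 ^ (m + 1 - s)

theorem barrier_zero (m : ℕ) : barrier m 0 = 0 := by simp [barrier]

theorem barrier_one (m : ℕ) : barrier m 1 = 2 ^ m := by
  simp only [barrier, Nat.add_sub_cancel, pow_succ]
  ring

theorem barrier_nonneg (m s : ℕ) : 0 ≤ barrier m s :=
  sub_nonneg.2 (pow_le_pow_right₀ one_le_two (Nat.sub_le _ _))

theorem barrier_le (m s : ℕ) : barrier m s ≤ 2 ^ (m + 1) :=
  sub_le_self _ (by positivity)

/-- Below `m` the increments of the barrier halve at each step up, which the drift `p ≥ 2 q`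
compensates. -/
theorem barrier_le_one_add {m s : ℕ} (hs : 1 ≤ s) {p q : ℝ} (hp : 0 ≤ p) (hq : 0 ≤ q)
    (hpq : p + q = 1) (hdrift : s ≤ m → 2 * q ≤ p) :
    barrier m s ≤ 1 + p * barrier m (s + 1) + q * barrier m (s - 1) := by
  obtain rfl : p = 1 - q := by linarith
  rcases le_or_gt s m with hsm | hms
  · obtain ⟨j, rfl⟩ := Nat.exists_eq_add_of_le hsm
    have hX : (0 : ℝ) < 2 ^ j := by positivity
    simp only [barrier, show s + j + 1 - s = j + 1 by omega, show s + j + 1 - (s + 1) = j by omega,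
      show s + j + 1 - (s - 1) = j + 2 by omega, pow_succ]
    linarith [mul_le_mul_of_nonneg_right (hdrift le_self_add) hX.le]
  · have h1 : m + 1 - s = 0 := by omega
    have h2 : m + 1 - (s + 1) = 0 := by omega
    have h3 : (2 : ℝ) ^ (m + 1 - (s - 1)) ≤ 2 :=
      (pow_le_pow_right₀ one_le_two (by omega)).trans_eq (pow_one 2)
    simp only [barrier, h1, h2, pow_zero]
    linarith [mul_le_mul_of_nonneg_left h3 hq]

/-- The infection rate `b(I)` of the paper. -/
noncomputable def cliqueBirthRate (n : ℕ) (lam alpha : ℝ) (I : ℕ) : ℝ :=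
  lam * (I : ℝ) ^ (1 + alpha) * ((n : ℝ) - I)

section CliqueChain

variable {n m s : ℕ} {lam alpha : ℝ}

theorem cliqueBirthRate_nonneg (hlam : 0 ≤ lam) (hsn : s ≤ n) :
    0 ≤ cliqueBirthRate n lam alpha s := by
  have : (s : ℝ) ≤ n := by exact_mod_cast hsn
  unfold cliqueBirthRate
  have := Real.rpow_nonneg (Nat.cast_nonneg s) (1 + alpha)
  positivity

theorem tsum_cliqueStep_mul_of_absorbing (h : s = 0 ∨ n < s) (g : ℕ → ℝ≥0∞) :
    ∑' J, cliqueStep n lam alpha s J * g J = g s := by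
  simp [cliqueStep, h]

theorem tsum_cliqueStep_mul (hs0 : s ≠ 0) (hsn : s ≤ n) (g : ℕ → ℝ≥0∞) :
    ∑' J, cliqueStep n lam alpha s J * g J =
      ENNReal.ofReal (cliqueBirthRate n lam alpha s / (cliqueBirthRate n lam alpha s + s)) *
          g (s + 1) +
        ENNReal.ofReal (s / (cliqueBirthRate n lam alpha s + s)) * g (s - 1) := by
  have hne : s + 1 ≠ s - 1 := by omega
  simp only [cliqueStep, show ¬(s = 0 ∨ n < s) by omega, if_false, cliqueBirthRate]
  rw [tsum_eq_sum (s := {s + 1, s - 1}) (by intro J hJ; simp_all), Finset.sum_pair hne]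
  simp [hne.symm]

theorem tsum_cliqueStep_le_one (hlam : 0 ≤ lam) (s : ℕ) :
    ∑' J, cliqueStep n lam alpha s J ≤ 1 := by
  by_cases h : s = 0 ∨ n < s
  · simpa using (tsum_cliqueStep_mul_of_absorbing (lam := lam) (alpha := alpha) h 1).le
  obtain ⟨hs0, hsn⟩ : s ≠ 0 ∧ s ≤ n := by omega
  have hb := cliqueBirthRate_nonneg (alpha := alpha) hlam hsn
  have hD : 0 < cliqueBirthRate n lam alpha s + s := by
    have : (1 : ℝ) ≤ s := by exact_mod_cast Nat.one_le_iff_ne_zero.2 hs0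
    linarith
  have := tsum_cliqueStep_mul (lam := lam) (alpha := alpha) hs0 hsn 1
  simp only [Pi.one_apply, mul_one] at this
  rw [this, ← ENNReal.ofReal_add (by positivity) (by positivity), ← add_div, div_self hD.ne',
    ENNReal.ofReal_one]

theorem ofReal_barrier_le_one_add_tsum_cliqueStep (hlam : 0 ≤ lam)
    (hdrift : ∀ s, 1 ≤ s → s ≤ m → 2 * (s : ℝ) ≤ cliqueBirthRate n lam alpha s) (hs0 : s ≠ 0) :
    ENNReal.ofReal (barrier m s) ≤
      1 + ∑' J, cliqueStep n lam alpha s J * ENNReal.ofReal (barrier m J) := by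
  by_cases h : s = 0 ∨ n < s
  · rw [tsum_cliqueStep_mul_of_absorbing h]
    exact le_add_self
  have hsn : s ≤ n := by omega
  have hs1 : 1 ≤ s := Nat.one_le_iff_ne_zero.2 hs0
  set b := cliqueBirthRate n lam alpha s
  have hb : 0 ≤ b := cliqueBirthRate_nonneg hlam hsn
  have hD : 0 < b + s := by
    have : (1 : ℝ) ≤ s := by exact_mod_cast hs1
    linarith
  have key := barrier_le_one_add (m := m) hs1 (p := b / (b + s)) (q := s / (b + s))
    (by positivity) (by positivity) (by field_simp)
    (fun hsm => by rw [← mul_div_assoc, div_le_div_iff_of_pos_right hD]; exact hdrift s hs1 hsm)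
  rw [tsum_cliqueStep_mul hs0 hsn]
  calc ENNReal.ofReal (barrier m s)
      ≤ ENNReal.ofReal (1 + b / (b + s) * barrier m (s + 1) + s / (b + s) * barrier m (s - 1)) :=
        ENNReal.ofReal_le_ofReal key
    _ = _ := by
      have := barrier_nonneg m (s + 1)
      have := barrier_nonneg m (s - 1)
      rw [add_assoc, ENNReal.ofReal_add zero_le_one (by positivity), ENNReal.ofReal_one,
        ENNReal.ofReal_add (by positivity) (by positivity),
        ENNReal.ofReal_mul (by positivity), ENNReal.ofReal_mul (by positivity)]

theorem two_mul_le_cliqueBirthRate (hlam : 0 ≤ lam)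
    (halpha : alpha ≤ 0) (hs : 1 ≤ s) (hsm : s ≤ m) (hmn : 2 * m ≤ n)
    (hdrift : 4 ≤ lam * n * (m : ℝ) ^ alpha) :
    2 * (s : ℝ) ≤ cliqueBirthRate n lam alpha s := by
  have hs0 : (0 : ℝ) < s := by exact_mod_cast hs
  have hsm' : (s : ℝ) ≤ m := by exact_mod_cast hsm
  have hmn' : (2 * m : ℝ) ≤ n := by exact_mod_cast hmn
  calc 2 * (s : ℝ) ≤ s * (lam * n * (m : ℝ) ^ alpha) / 2 := by nlinarith
    _ = lam * (s * (m : ℝ) ^ alpha) * (n / 2) := by ring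
    _ ≤ lam * (s * (s : ℝ) ^ alpha) * (n - s) := by
      gcongr lam * (s * ?_) * ?_
      · exact Real.rpow_le_rpow_of_nonpos hs0 hsm' halpha
      · linarith
    _ = cliqueBirthRate n lam alpha s := by
      rw [cliqueBirthRate, Real.rpow_add hs0, Real.rpow_one]

theorem two_pow_le_cliqueET (halpha : alpha ≤ 0) (hmn : 2 * m ≤ n)
    (hdrift : 4 ≤ lam * n * (m : ℝ) ^ alpha) :
    ENNReal.ofReal (2 ^ m) ≤ cliqueET n lam alpha 1 := by
  have hlam : 0 < lam :=
    pos_of_mul_pos_left (pos_of_mul_pos_left (by linarith)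
      (Real.rpow_nonneg (Nat.cast_nonneg m) _)) (Nat.cast_nonneg n)
  have := le_tsum_one_sub_markovDist_of_lyapunov 1 0
    (f := fun s => ENNReal.ofReal (barrier m s)) (by simp [barrier_zero])
    (fun s hs => ofReal_barrier_le_one_add_tsum_cliqueStep hlam.le
      (fun s hs hsm => two_mul_le_cliqueBirthRate hlam.le halpha hs hsm hmn hdrift) hs)
    (tsum_cliqueStep_le_one hlam.le) ENNReal.ofReal_ne_top
    (fun s => ENNReal.ofReal_le_ofReal (barrier_le m s))
  simpa [barrier_one, cliqueET, cliqueDist] using this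

end CliqueChain

theorem isBigO_natLog_log (b : ℕ) :
    (fun n : ℕ => (Nat.log b n : ℝ)) =O[atTop] fun n : ℕ => Real.log n := by
  refine IsBigO.of_bound (Real.log b)⁻¹ (Eventually.of_forall fun n => ?_)
  have := inv_nonneg.2 (Real.log_natCast_nonneg b)
  rw [Real.norm_natCast, Real.norm_eq_abs]
  calc (Nat.log b n : ℝ) ≤ Real.logb b n := Real.natLog_le_logb n b
    _ = (Real.log b)⁻¹ * Real.log n := by rw [Real.logb, div_eq_inv_mul]
    _ ≤ (Real.log b)⁻¹ * |Real.log n| := by gcongr; exact le_abs_self _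

theorem eventually_two_mul_le_of_isBigO_log {m : ℕ → ℕ}
    (hm : (fun n => (m n : ℝ)) =O[atTop] fun n : ℕ => Real.log n) :
    ∀ᶠ n in atTop, 2 * m n ≤ n := by
  have hlittle := hm.trans_isLittleO
    (Real.isLittleO_log_id_atTop.comp_tendsto tendsto_natCast_atTop_atTop)
  filter_upwards [hlittle.def (by norm_num : (0 : ℝ) < 1 / 2)] with n hn
  simp only [Real.norm_natCast, Function.comp_apply, id] at hn
  exact_mod_cast (by linarith : (2 * m n : ℝ) ≤ n)

theorem eventually_mul_pow_le_two_pow (M : ℝ) (k : ℕ) :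
    ∀ᶠ n : ℕ in atTop, M * (n : ℝ) ^ k ≤ 2 ^ ((k + 1) * (Nat.log 2 n + 1)) := by
  filter_upwards [eventually_ge_atTop ⌈M⌉₊] with n hn
  have hM : M ≤ n := (Nat.le_ceil M).trans (by exact_mod_cast hn)
  have hpow : n ^ (k + 1) ≤ 2 ^ ((k + 1) * (Nat.log 2 n + 1)) := by
    rw [mul_comm, pow_mul]
    exact Nat.pow_le_pow_left (Nat.lt_pow_succ_log_self one_lt_two n).le _
  calc M * (n : ℝ) ^ k ≤ n * (n : ℝ) ^ k := by gcongr
    _ = (n ^ (k + 1) : ℕ) := by push_cast; ring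
    _ ≤ 2 ^ ((k + 1) * (Nat.log 2 n + 1)) := by exact_mod_cast hpow

theorem tendsto_mul_rpow_of_isBigO_log {lam : ℕ → ℝ} {alpha : ℝ} (halpha : alpha ≤ 0)
    (hcond : Tendsto (fun n : ℕ => lam n * n * Real.log n ^ alpha) atTop atTop)
    {m : ℕ → ℝ} (hm : m =O[atTop] fun n : ℕ => Real.log n) (hm0 : ∀ᶠ n in atTop, 0 < m n) :
    Tendsto (fun n => lam n * n * m n ^ alpha) atTop atTop := by
  obtain ⟨C, hC, hmC⟩ := hm.exists_pos
  refine tendsto_atTop_mono' _ ?_ (hcond.const_mul_atTop (Real.rpow_pos_of_pos hC alpha))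
  have hlog : ∀ᶠ n : ℕ in atTop, 0 < Real.log n :=
    tendsto_natCast_atTop_atTop.eventually (Real.tendsto_log_atTop.eventually_gt_atTop 0)
  filter_upwards [hmC.bound, hm0, hlog, hcond.eventually_gt_atTop 0] with n hmn hm0 hlog hpos
  rw [Real.norm_eq_abs, Real.norm_eq_abs, abs_of_pos hm0, abs_of_pos hlog] at hmn
  have hlamn : 0 < lam n * n := pos_of_mul_pos_left hpos (Real.rpow_nonneg hlog.le _)
  calc C ^ alpha * (lam n * n * Real.log n ^ alpha) = lam n * n * (C * Real.log n) ^ alpha := by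
        rw [Real.mul_rpow hC.le hlog.le]; ring
    _ ≤ lam n * n * m n ^ alpha :=
        mul_le_mul_of_nonneg_left (Real.rpow_le_rpow_of_nonpos hm0 hmn halpha) hlamn.le

theorem clique_sublinear_superpolynomial_general (alpha : ℝ) (ha2 : alpha < 0)
    (lam : ℕ → ℝ)
    (hcond : Tendsto (fun n : ℕ => lam n * n * Real.log n ^ alpha) atTop atTop) :
    ∀ k : ℕ, ∀ M : ℝ, ∀ᶠ n : ℕ in atTop,
      ENNReal.ofReal (M * (n : ℝ) ^ k) ≤ cliqueET n (lam n) alpha 1 := by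
  intro k M
  set m : ℕ → ℕ := fun n => (k + 1) * (Nat.log 2 n + 1)
  have hm : (fun n => (m n : ℝ)) =O[atTop] fun n : ℕ => Real.log n := by
    have hone := (Real.isLittleO_const_log_atTop (c := 1)).comp_tendsto
      tendsto_natCast_atTop_atTop |>.isBigO
    simpa [m] using ((isBigO_natLog_log 2).add hone).const_mul_left ((k : ℝ) + 1)
  have hdrift := (tendsto_mul_rpow_of_isBigO_log ha2.le hcond hm
    (Eventually.of_forall fun n => by positivity)).eventually_ge_atTop 4
  filter_upwards [hdrift, eventually_two_mul_le_of_isBigO_log hm,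
    eventually_mul_pow_le_two_pow M k] with n hdrift hmn hpow
  exact (ENNReal.ofReal_le_ofReal hpow).trans (two_pow_le_cliqueET ha2.le hmn hdrift)

/-- For sub-linear scaling with λ ∈ ω(log(n)^{-α}/n), the expected
survival time of the clique infection chain is super-polynomial in n. -/
theorem clique_sublinear_superpolynomial (alpha : ℝ) (ha1 : -1 < alpha) (ha2 : alpha < 0)
    (lam : ℕ → ℝ) (hpos : ∀ n, 0 < lam n)
    (hcond : Tendsto (fun n : ℕ => lam n * n * Real.log n ^ alpha) atTop atTop) :
    ∀ k : ℕ, ∀ M : ℝ, ∀ᶠ n : ℕ in atTop,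
      ENNReal.ofReal (M * (n : ℝ) ^ k) ≤ cliqueET n (lam n) alpha 1 :=
  clique_sublinear_superpolynomial_general alpha ha2 lam hcond
end

section
/- Let α > 0, let n ≥ 2 be an integer, and let λ > 0 with λn ≤ 1. Let m ≥ 1 be an integer with m ≤ n/2 and m ≤ (λn/2)^{−1/α}. Then for the clique infection chain on {0,…,n} started at X₀ = 1, the probability that the chain reaches the state m before reaching the state 0 is at least (λn/2)^m. -/
open scoped ENNReal
open Filter Asymptotics

/-!
Write `c = λn/2` and `h I` for the probability of reaching `m` before `0` from `I`. One step of
the chain shows that `h` is superharmonic on `1 ≤ I < m`, with `h 0 = 0` and `h m = 1`. For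
`I ≤ n/2` and `α ≥ 0` the infection rate satisfies `b(I) ≥ I c`, which makes
`g I = c ^ (m - I) - c ^ m` subharmonic there, with `g 0 = 0` and `g m ≤ 1`. The discrete
minimum principle gives `h 1 ≥ g 1 = c ^ (m - 1) (1 - c)`, which is at least `c ^ m` as `c ≤ 1/2`.
-/

section MarkovChain

variable {S : Type*} [DecidableEq S] (step : S → S → ℝ≥0∞)

theorem markovDist_succ_eq_tsum_step_mul (s0 : S) (t : ℕ) (J : S) :
    markovDist step s0 (t + 1) J = ∑' s, step s0 s * markovDist step s t J := by
  induction t generalizing J with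
  | zero =>
    simp only [markovDist, ite_mul, one_mul, zero_mul, mul_ite, mul_one, mul_zero]
    rw [tsum_ite_eq, tsum_eq_single J fun s hs => if_neg (Ne.symm hs), if_pos rfl]
  | succ t ih =>
    show ∑' s', markovDist step s0 (t + 1) s' * step s' J
      = ∑' s, step s0 s * ∑' s', markovDist step s t s' * step s' J
    simp_rw [ih, ← ENNReal.tsum_mul_right, ← ENNReal.tsum_mul_left, mul_assoc]
    exact ENNReal.tsum_comm

theorem tsum_markovDist_eq_one (h : ∀ s, ∑' J, step s J = 1) (s0 : S) (t : ℕ) :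
    ∑' J, markovDist step s0 t J = 1 := by
  induction t with
  | zero => simp [markovDist]
  | succ t ih =>
    simp_rw [markovDist]
    rw [ENNReal.tsum_comm]
    simp_rw [ENNReal.tsum_mul_left, h, mul_one, ih]

theorem markovDist_monotone {a : S} (ha : step a a = 1) (s0 : S) :
    Monotone fun t => markovDist step s0 t a :=
  monotone_nat_of_le_succ fun t =>
    calc markovDist step s0 t a = markovDist step s0 t a * step a a := by rw [ha, mul_one]
      _ ≤ markovDist step s0 (t + 1) a := ENNReal.le_tsum a

theorem markovDist_of_absorbing {z : S} (hz : step z = fun J => if J = z then 1 else 0)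
    (t : ℕ) : markovDist step z t = fun J => if J = z then 1 else 0 := by
  induction t with
  | zero => rfl
  | succ t ih =>
    funext J
    simp only [markovDist, ih, ite_mul, one_mul, zero_mul]
    exact (tsum_ite_eq z (step · J)).trans (congrFun hz J)

omit [DecidableEq S] in
theorem absorbStep_self (a : S) : absorbStep {a} step a a = 1 := by
  simp [absorbStep]

omit [DecidableEq S] in
theorem absorbStep_of_ne {a s : S} (hs : s ≠ a) : absorbStep {a} step s = step s := by
  simp [absorbStep, hs]

omit [DecidableEq S] in
theorem tsum_absorbStep_eq_one (h : ∀ s, ∑' J, step s J = 1) (A : Set S) (s : S) :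
    ∑' J, absorbStep A step s J = 1 := by
  by_cases hs : s ∈ A
  · simp only [absorbStep, if_pos hs]
    classical
    convert tsum_ite_eq s fun _ => (1 : ℝ≥0∞)
  · simp only [absorbStep, if_neg hs, h]

theorem hitProb_singleton (s0 a : S) :
    hitProb step s0 {a} = ⨆ t, markovDist (absorbStep {a} step) s0 t a := by
  refine iSup_congr fun t => (tsum_eq_single a fun s hs => ?_).trans ?_
  · exact Set.indicator_of_notMem (Set.notMem_singleton_iff.mpr hs) _
  · exact Set.indicator_of_mem rfl (markovDist (absorbStep {a} step) s0 t)

theorem hitProb_le_one (h : ∀ s, ∑' J, step s J = 1) (s0 a : S) : hitProb step s0 {a} ≤ 1 := by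
  rw [hitProb_singleton]
  exact iSup_le fun t => (ENNReal.le_tsum a).trans
    (tsum_markovDist_eq_one _ (tsum_absorbStep_eq_one step h _) s0 t).le

theorem hitProb_self (h : ∀ s, ∑' J, step s J = 1) (a : S) : hitProb step a {a} = 1 :=
  (hitProb_le_one step h a a).antisymm <| by
    rw [hitProb_singleton]
    exact le_iSup_of_le 0 (by simp [markovDist])

theorem hitProb_of_absorbing {z a : S} (hz : step z = fun J => if J = z then 1 else 0)
    (hza : z ≠ a) : hitProb step z {a} = 0 := by
  have hz' : absorbStep {a} step z = fun J => if J = z then 1 else 0 := by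
    rwa [absorbStep_of_ne _ hza]
  simp [hitProb_singleton, markovDist_of_absorbing _ hz', Ne.symm hza]

theorem tsum_step_mul_hitProb_le {a s : S} (hs : s ≠ a) :
    ∑' s', step s s' * hitProb step s' {a} ≤ hitProb step s {a} := by
  set P := absorbStep {a} step
  have hmono : ∀ s', Monotone fun t => step s s' * markovDist P s' t a := fun s' _ _ hle =>
    mul_le_mul_right (markovDist_monotone P (absorbStep_self step a) s' hle) _
  simp_rw [hitProb_singleton, ENNReal.mul_iSup]
  rw [ENNReal.tsum_eq_iSup_sum]
  refine iSup_le fun F => ?_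
  rw [ENNReal.finsetSum_iSup_of_monotone hmono]
  refine iSup_le fun t => le_iSup_of_le (t + 1) ?_
  rw [markovDist_succ_eq_tsum_step_mul, absorbStep_of_ne step hs]
  exact ENNReal.sum_le_tsum F

end MarkovChain

theorem le_at_one_of_superharmonic_of_subharmonic {m : ℕ} {p q f g : ℕ → ℝ} (hm : 1 ≤ m)
    (hpq : ∀ I, 1 ≤ I → I < m → p I + q I = 1) (hp : ∀ I, 1 ≤ I → I < m → 0 ≤ p I)
    (hq : ∀ I, 1 ≤ I → I < m → 0 < q I)
    (hf : ∀ I, 1 ≤ I → I < m → p I * f (I + 1) + q I * f (I - 1) ≤ f I)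
    (hg : ∀ I, 1 ≤ I → I < m → g I ≤ p I * g (I + 1) + q I * g (I - 1))
    (h0 : g 0 ≤ f 0) (hm' : g m ≤ f m) : g 1 ≤ f 1 := by
  set d : ℕ → ℝ := fun I => f I - g I with hd
  have hincr : ∀ I, 1 ≤ I → I < m → p I * (d (I + 1) - d I) ≤ q I * (d I - d (I - 1)) :=
    fun I h1 h2 => by
      linear_combination hf I h1 h2 + hg I h1 h2 - (f I - g I) * hpq I h1 h2
  by_contra! h1
  -- Once `d 1 < 0`, the increments of `d` stay negative up to `m`.
  have hdec : ∀ k, k + 1 ≤ m → d (k + 1) < d k ∧ d (k + 1) < 0 := by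
    intro k
    induction k with
    | zero => exact fun _ => ⟨by linarith, by linarith⟩
    | succ k ih =>
      intro hk
      obtain ⟨hlt, hneg⟩ := ih (by omega)
      have hqneg : q (k + 1) * (d (k + 1) - d k) < 0 :=
        mul_neg_of_pos_of_neg (hq (k + 1) (by omega) (by omega)) (by linarith)
      have hstep := hincr (k + 1) (by omega) (by omega)
      have hp' := hp (k + 1) (by omega) (by omega)
      simp only [Nat.add_sub_cancel] at hstep
      have : d (k + 2) < d (k + 1) := by
        by_contra! hge
        nlinarith
      exact ⟨this, by linarith⟩
  have := (hdec (m - 1) (by omega)).2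
  rw [Nat.sub_add_cancel hm] at this
  linarith

theorem le_div_mul_add_div_mul_of_mul_le {b x c : ℝ} (hx : 0 < x) (hc0 : 0 ≤ c) (hc1 : c ≤ 1)
    (hb : x * c ≤ b) (k : ℕ) (d : ℝ) :
    c ^ (k + 1) - d ≤ b / (b + x) * (c ^ k - d) + x / (b + x) * (c ^ (k + 2) - d) := by
  have hbx : 0 < b + x := by nlinarith
  rw [div_mul_eq_mul_div, div_mul_eq_mul_div, ← add_div, le_div_iff₀ hbx]
  have hgap : 0 ≤ c ^ k * (1 - c) * (b - x * c) := by
    have := pow_nonneg hc0 k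
    have : 0 ≤ 1 - c := by linarith
    have : 0 ≤ b - x * c := by linarith
    positivity
  linear_combination hgap

noncomputable def cliqueRate (n : ℕ) (lam alpha : ℝ) (I : ℕ) : ℝ :=
  lam * (I : ℝ) ^ (1 + alpha) * ((n : ℝ) - I)

noncomputable def cliqueUp (n : ℕ) (lam alpha : ℝ) (I : ℕ) : ℝ :=
  cliqueRate n lam alpha I / (cliqueRate n lam alpha I + I)

noncomputable def cliqueDown (n : ℕ) (lam alpha : ℝ) (I : ℕ) : ℝ :=
  I / (cliqueRate n lam alpha I + I)

section Clique

variable {n : ℕ} {lam alpha : ℝ} {I : ℕ}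

theorem cliqueRate_nonneg (hlam : 0 ≤ lam) (hIn : I ≤ n) : 0 ≤ cliqueRate n lam alpha I := by
  have := sub_nonneg.2 (by exact_mod_cast hIn : (I : ℝ) ≤ n)
  unfold cliqueRate
  positivity

theorem mul_le_cliqueRate (hlam : 0 ≤ lam) (ha : 0 ≤ alpha) (hI : 1 ≤ I) (hIn : 2 * I ≤ n) :
    I * (lam * n / 2) ≤ cliqueRate n lam alpha I := by
  have hI' : (1 : ℝ) ≤ I := by exact_mod_cast hI
  have hIn' : (2 * I : ℝ) ≤ n := by exact_mod_cast hIn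
  have hpow : (I : ℝ) ≤ (I : ℝ) ^ (1 + alpha) := by
    simpa using Real.rpow_le_rpow_of_exponent_le hI' (by linarith : (1 : ℝ) ≤ 1 + alpha)
  calc (I : ℝ) * (lam * n / 2) ≤ lam * I * (n / 2) := by linarith
    _ ≤ lam * (I : ℝ) ^ (1 + alpha) * ((n : ℝ) - I) := by gcongr; linarith

theorem cliqueRate_add_pos (hlam : 0 ≤ lam) (hI : 1 ≤ I) (hIn : I ≤ n) :
    0 < cliqueRate n lam alpha I + I := by
  have : (1 : ℝ) ≤ I := by exact_mod_cast hI
  linarith [cliqueRate_nonneg (alpha := alpha) hlam hIn]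

theorem cliqueUp_nonneg (hlam : 0 ≤ lam) (hIn : I ≤ n) : 0 ≤ cliqueUp n lam alpha I :=
  div_nonneg (cliqueRate_nonneg hlam hIn) (add_nonneg (cliqueRate_nonneg hlam hIn) I.cast_nonneg)

theorem cliqueDown_pos (hlam : 0 ≤ lam) (hI : 1 ≤ I) (hIn : I ≤ n) :
    0 < cliqueDown n lam alpha I :=
  div_pos (by exact_mod_cast hI) (cliqueRate_add_pos hlam hI hIn)

theorem cliqueUp_add_cliqueDown (hlam : 0 ≤ lam) (hI : 1 ≤ I) (hIn : I ≤ n) :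
    cliqueUp n lam alpha I + cliqueDown n lam alpha I = 1 := by
  rw [cliqueUp, cliqueDown, ← add_div, div_self (cliqueRate_add_pos hlam hI hIn).ne']

theorem cliqueStep_zero : cliqueStep n lam alpha 0 = fun J => if J = 0 then 1 else 0 := by
  simp [cliqueStep]

theorem cliqueStep_of_one_le_of_le (hI : 1 ≤ I) (hIn : I ≤ n) :
    cliqueStep n lam alpha I = fun J =>
      if J = I + 1 then ENNReal.ofReal (cliqueUp n lam alpha I)
      else if J = I - 1 then ENNReal.ofReal (cliqueDown n lam alpha I) else 0 := by
  rw [cliqueStep, if_neg (by omega)]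
  rfl

theorem tsum_cliqueStep (hlam : 0 ≤ lam) (I : ℕ) : ∑' J, cliqueStep n lam alpha I J = 1 := by
  by_cases hI : I = 0 ∨ n < I
  · simp [cliqueStep, if_pos hI]
  · rw [cliqueStep_of_one_le_of_le (by omega) (by omega),
      tsum_eq_sum (s := {I + 1, I - 1}) fun J hJ => by simp_all,
      Finset.sum_pair (by omega), if_pos rfl, if_neg (by omega), if_pos rfl,
      ← ENNReal.ofReal_add (cliqueUp_nonneg hlam (by omega))
        (cliqueDown_pos hlam (by omega) (by omega)).le,
      cliqueUp_add_cliqueDown hlam (by omega) (by omega), ENNReal.ofReal_one]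

theorem cliqueUp_mul_add_cliqueDown_mul_hitProb_le (hlam : 0 ≤ lam) {a : ℕ} (hI : 1 ≤ I)
    (hIn : I ≤ n) (hIa : I ≠ a) :
    cliqueUp n lam alpha I * (hitProb (cliqueStep n lam alpha) (I + 1) {a}).toReal
      + cliqueDown n lam alpha I * (hitProb (cliqueStep n lam alpha) (I - 1) {a}).toReal
      ≤ (hitProb (cliqueStep n lam alpha) I {a}).toReal := by
  set H := fun J => hitProb (cliqueStep n lam alpha) J {a}
  have hfin : ∀ J, H J ≠ ⊤ := fun J =>
    ne_top_of_le_ne_top ENNReal.one_ne_top (hitProb_le_one _ (tsum_cliqueStep hlam) J a)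
  have hle : ENNReal.ofReal (cliqueUp n lam alpha I) * H (I + 1)
      + ENNReal.ofReal (cliqueDown n lam alpha I) * H (I - 1) ≤ H I := by
    refine le_trans ?_ (tsum_step_mul_hitProb_le _ hIa)
    refine le_of_eq_of_le ?_ (ENNReal.sum_le_tsum {I + 1, I - 1})
    rw [Finset.sum_pair (by omega), cliqueStep_of_one_le_of_le hI hIn]
    simp only [if_neg (by omega : I - 1 ≠ I + 1), ↓reduceIte, H]
  have := ENNReal.toReal_mono (hfin I) hle
  rwa [ENNReal.toReal_add (ENNReal.mul_ne_top ENNReal.ofReal_ne_top (hfin _))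
      (ENNReal.mul_ne_top ENNReal.ofReal_ne_top (hfin _)), ENNReal.toReal_mul, ENNReal.toReal_mul,
    ENNReal.toReal_ofReal (cliqueUp_nonneg hlam hIn),
    ENNReal.toReal_ofReal (cliqueDown_pos hlam hI hIn).le] at this

theorem cliqueUp_mul_add_cliqueDown_mul_geometric_ge (hlam : 0 ≤ lam) (ha : 0 ≤ alpha)
    (hc : lam * n / 2 ≤ 1) {m : ℕ} (hI : 1 ≤ I) (hIm : I < m) (hmn : 2 * m ≤ n) :
    (lam * n / 2) ^ (m - I) - (lam * n / 2) ^ m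
      ≤ cliqueUp n lam alpha I * ((lam * n / 2) ^ (m - (I + 1)) - (lam * n / 2) ^ m)
        + cliqueDown n lam alpha I * ((lam * n / 2) ^ (m - (I - 1)) - (lam * n / 2) ^ m) := by
  obtain ⟨k, hk⟩ : ∃ k, m - (I + 1) = k := ⟨_, rfl⟩
  rw [show m - I = k + 1 by omega, show m - (I - 1) = k + 2 by omega, hk]
  exact le_div_mul_add_div_mul_of_mul_le (by exact_mod_cast hI) (by positivity) hc
    (mul_le_cliqueRate hlam ha hI (by omega)) k _

end Clique

theorem clique_superlinear_reach_lower_general (n m : ℕ) (lam alpha : ℝ)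
    (hm : 1 ≤ m) (hlam : 0 < lam) (hln : lam * n ≤ 1) (ha : 0 < alpha)
    (hm1 : (m : ℝ) ≤ (n : ℝ) / 2) :
    ENNReal.ofReal ((lam * n / 2) ^ m) ≤ hitProb (cliqueStep n lam alpha) 1 {m} := by
  set c := lam * n / 2 with hc
  have hc0 : 0 ≤ c := by positivity
  have hc1 : c ≤ 1 / 2 := by rw [hc]; linarith
  have hmn : 2 * m ≤ n := by exact_mod_cast (by push_cast; linarith : ((2 * m : ℕ) : ℝ) ≤ n)
  have hstoch := tsum_cliqueStep (n := n) (alpha := alpha) hlam.le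
  set h : ℕ → ℝ := fun I => (hitProb (cliqueStep n lam alpha) I {m}).toReal
  have hcompare : c ^ (m - 1) - c ^ m ≤ h 1 :=
    le_at_one_of_superharmonic_of_subharmonic (g := fun I => c ^ (m - I) - c ^ m) hm
      (fun _ hI _ => cliqueUp_add_cliqueDown hlam.le hI (by omega))
      (fun _ _ _ => cliqueUp_nonneg hlam.le (by omega))
      (fun _ hI _ => cliqueDown_pos hlam.le hI (by omega))
      (fun _ hI hIm => cliqueUp_mul_add_cliqueDown_mul_hitProb_le hlam.le hI (by omega) hIm.ne)
      (fun _ hI hIm => cliqueUp_mul_add_cliqueDown_mul_geometric_ge hlam.le ha.le (by linarith)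
        hI hIm hmn)
      (by simp [h, hitProb_of_absorbing _ cliqueStep_zero (by omega : 0 ≠ m)])
      (by simp [h, hitProb_self _ hstoch, hc0])
  have hhalf : c ^ m ≤ c ^ (m - 1) - c ^ m := by
    have hpow : c ^ m = c ^ (m - 1) * c := by rw [← pow_succ, Nat.sub_add_cancel hm]
    nlinarith [pow_nonneg hc0 (m - 1)]
  calc ENNReal.ofReal (c ^ m) ≤ ENNReal.ofReal (h 1) := ENNReal.ofReal_le_ofReal (by linarith)
    _ = hitProb (cliqueStep n lam alpha) 1 {m} :=
      ENNReal.ofReal_toReal (ne_top_of_le_ne_top ENNReal.one_ne_top (hitProb_le_one _ hstoch 1 m))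

/-- For super-linear scaling with λn ≤ 1, the probability that the clique
infection chain started at 1 reaches m before 0 is at least (λn/2)^m. -/
theorem clique_superlinear_reach_lower (n m : ℕ) (lam alpha : ℝ)
    (hn : 2 ≤ n) (hm : 1 ≤ m) (hlam : 0 < lam) (hln : lam * n ≤ 1) (ha : 0 < alpha)
    (hm1 : (m : ℝ) ≤ (n : ℝ) / 2) (hm2 : (m : ℝ) ≤ (lam * n / 2) ^ (-1 / alpha)) :
    ENNReal.ofReal ((lam * n / 2) ^ m) ≤ hitProb (cliqueStep n lam alpha) 1 {m} :=
  clique_superlinear_reach_lower_general n m lam alpha hm hlam hln ha hm1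
end
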